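/- (Local collapse of phase space.) Let Φ be a symplectic 2n×2n real matrix (Φᵀ J_{2n} Φ = J_{2n}), let S ⊆ {1,…,n} with |S| = k (0 < k < n), and let Π_S (resp. Π_{S^c}) be the 2n×2k (resp. 2n×(2n−2k)) matrix whose columns are the standard basis vectors {e_{2i−1}, e_{2i} : i ∈ S} (resp. i ∈ S^c) in increasing order. Define the volume expansion factors ν_{2k} = √(det((ΦΠ_S)ᵀ(ΦΠ_S))) and ν_{2n−2k} = √(det((ΦΠ_{S^c})ᵀ(ΦΠ_{S^c}))). Then ν_{2k} ≥ 1, ν_{2n−2k} ≥ 1, and ν_{2k}·ν_{2n−2k} ≥ 1; since by Liouville's theorem ν_{2k}·ν_{2n−2k}·sin β = 1 (where β is the angle between the image subspaces), the angle factor satisfies sin β = 1/(ν_{2k}·ν_{2n−2k}) ≤ 1, so expansion of complementary symplectic slices forces collapse of the angle between their images. -/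
import Mathlib


open Matrix

/-- The standard symplectic matrix `J` on `ℝ^{2m}`, with coordinates ordered in
symplectic pairs `(p₁,q₁,…,p_m,q_m)`. -/
def symplJ (m : ℕ) : Matrix (Fin (2 * m)) (Fin (2 * m)) ℝ :=
  Matrix.of fun i j =>
    if i.val + 1 = j.val ∧ i.val % 2 = 0 then (-1 : ℝ)
    else if j.val + 1 = i.val ∧ j.val % 2 = 0 then 1 else 0

/-- For a `k`-element subset `S ⊆ {1,…,n}`, the increasing enumeration of the
row indices `{2i−1, 2i : i ∈ S}` (0-indexed: `{2i, 2i+1 : i ∈ S}`) of the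
symplectic pairs of rows selected by `S`. -/
def symplRows {n : ℕ} (k : ℕ) (S : Finset (Fin n)) (hS : S.card = k) :
    Fin (2 * k) → Fin (2 * n) := fun a =>
  ⟨2 * (S.orderEmbOfFin hS ⟨a.val / 2, by omega⟩).val + a.val % 2, by
    have h := (S.orderEmbOfFin hS ⟨a.val / 2, by omega⟩).isLt
    omega⟩

/-- `Π_S` : the `2n × 2k` matrix whose columns are the standard basis vectors
`{e_{2i−1}, e_{2i} : i ∈ S}` in increasing order, spanning the direct sum of
the symplectic planes indexed by `S`. -/
def symplSlice {n : ℕ} (k : ℕ) (S : Finset (Fin n)) (hS : S.card = k) :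
    Matrix (Fin (2 * n)) (Fin (2 * k)) ℝ :=
  Matrix.of fun r c => if r = symplRows k S hS c then 1 else 0

open Equiv Finset

lemma det_mul_rect {ι κ : Type*} [Fintype ι] [DecidableEq ι] [Fintype κ] [DecidableEq κ]
    (A : Matrix ι κ ℝ) (B : Matrix κ ι ℝ) :
    det (A * B) = ∑ p : ι → κ, det (A.submatrix id p) * ∏ i, B (p i) i := by
  have h1 : det (A * B)
      = ∑ p : ι → κ, ∑ σ : Perm ι, (Perm.sign σ : ℝ) * ∏ i, A (σ i) (p i) * B (p i) i := by
    simp only [det_apply', mul_apply, Finset.prod_univ_sum, Finset.mul_sum,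
      Fintype.piFinset_univ]
    rw [Finset.sum_comm]
  rw [h1]
  refine Finset.sum_congr rfl fun p _ => ?_
  rw [det_apply', Finset.sum_mul]
  refine Finset.sum_congr rfl fun σ _ => ?_
  rw [mul_assoc, ← Finset.prod_mul_distrib]
  rfl

lemma binet_sym {ι κ : Type*} [Fintype ι] [DecidableEq ι] [Fintype κ] [DecidableEq κ]
    (A : Matrix ι κ ℝ) (B : Matrix κ ι ℝ) :
    ∑ p : ι → κ, det (A.submatrix id p) * det (B.submatrix p id)
      = (Fintype.card ι).factorial * det (A * B) := by
  have h1 : ∀ p : ι → κ, det (B.submatrix p id)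
      = ∑ σ : Perm ι, (Perm.sign σ : ℝ) * ∏ i, B (p (σ i)) i := fun p => by
    rw [det_apply']; rfl
  calc ∑ p : ι → κ, det (A.submatrix id p) * det (B.submatrix p id)
      = ∑ p : ι → κ, ∑ σ : Perm ι,
          (Perm.sign σ : ℝ) * det (A.submatrix id p) * ∏ i, B (p (σ i)) i := by
        refine Finset.sum_congr rfl fun p _ => ?_
        rw [h1, Finset.mul_sum]
        exact Finset.sum_congr rfl fun σ _ => by ring
    _ = ∑ σ : Perm ι, ∑ p : ι → κ,
          (Perm.sign σ : ℝ) * det (A.submatrix id p) * ∏ i, B (p (σ i)) i :=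
        Finset.sum_comm
    _ = ∑ σ : Perm ι, ∑ q : ι → κ, det (A.submatrix id q) * ∏ i, B (q i) i := by
        refine Finset.sum_congr rfl fun σ _ => ?_
        refine Fintype.sum_bijective (fun p : ι → κ => p ∘ ⇑σ)
          ((Equiv.arrowCongr σ.symm (Equiv.refl κ)).bijective) _ _ fun p => ?_
        have hsub : A.submatrix id (p ∘ ⇑σ) = (A.submatrix id p).submatrix id ⇑σ := rfl
        rw [hsub, det_permute']
        have hprod : ∏ i, B ((p ∘ ⇑σ) i) i = ∏ i, B (p (σ i)) i := rfl
        rw [hprod, mul_assoc]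
    _ = (Fintype.card ι).factorial * det (A * B) := by
        rw [Finset.sum_const, det_mul_rect]
        simp [Finset.card_univ, Fintype.card_perm, nsmul_eq_mul]

lemma det_sub_transpose {ι κ : Type*} [Fintype ι] [DecidableEq ι] [Fintype κ]
    (X : Matrix κ ι ℝ) (p : ι → κ) :
    det (X.submatrix p id) = det (Xᵀ.submatrix id p) := by
  rw [← Matrix.det_transpose (X.submatrix p id)]
  congr 1

lemma gram_det_ge {ι κ : Type*} [Fintype ι] [DecidableEq ι] [Fintype κ] [DecidableEq κ]
    (L : Matrix κ ι ℝ) (M : Matrix κ κ ℝ) (hM : Mᵀ * M = 1)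
    (hd : det (Lᵀ * M * L) ^ 2 = 1) : 1 ≤ det (Lᵀ * L) := by
  set c : ℝ := ((Fintype.card ι).factorial : ℝ) with hc
  have hcpos : (0:ℝ) < c := by
    rw [hc]; exact_mod_cast (Fintype.card ι).factorial_pos
  set G : ℝ := det (Lᵀ * L) with hG
  have h2 : ∑ p : ι → κ, det (Lᵀ.submatrix id p) ^ 2 = c * G := by
    have := binet_sym Lᵀ L
    rw [← this]
    refine Finset.sum_congr rfl fun p _ => ?_
    rw [det_sub_transpose, sq]
  have h3 : ∑ p : ι → κ, det ((M * L).submatrix p id) ^ 2 = c * G := by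
    have := binet_sym (M * L)ᵀ (M * L)
    have hMM : (M * L)ᵀ * (M * L) = Lᵀ * L := by
      rw [Matrix.transpose_mul, Matrix.mul_assoc, ← Matrix.mul_assoc Mᵀ M L, hM,
        Matrix.one_mul]
    rw [hMM] at this
    rw [← this]
    refine Finset.sum_congr rfl fun p _ => ?_
    rw [det_sub_transpose, sq]
  have h1 : ∑ p : ι → κ, det (Lᵀ.submatrix id p) * det ((M * L).submatrix p id)
      = c * det (Lᵀ * M * L) := by
    rw [binet_sym Lᵀ (M * L), ← Matrix.mul_assoc]
  have hGnn : 0 ≤ G := by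
    have hnn : 0 ≤ ∑ p : ι → κ, det (Lᵀ.submatrix id p) ^ 2 :=
      Finset.sum_nonneg fun p _ => sq_nonneg _
    rw [h2] at hnn
    nlinarith [hcpos]
  have hcs := Finset.sum_mul_sq_le_sq_mul_sq Finset.univ
    (fun p : ι → κ => det (Lᵀ.submatrix id p)) (fun p => det ((M * L).submatrix p id))
  rw [h1, h2, h3] at hcs
  have h4 : c ^ 2 ≤ c ^ 2 * G ^ 2 := by nlinarith [hcs, hd]
  have hG2 : 1 ≤ G ^ 2 := by nlinarith [h4, mul_pos hcpos hcpos]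
  nlinarith [hG2, hGnn]

lemma symplJ_apply_eq_zero {m : ℕ} {l i : Fin (2 * m)}
    (h1 : ¬(l.val + 1 = i.val ∧ l.val % 2 = 0))
    (h2 : ¬(i.val + 1 = l.val ∧ i.val % 2 = 0)) : symplJ m l i = 0 := by
  simp only [symplJ, of_apply]
  rw [if_neg h1, if_neg h2]

lemma symplJ_tmul (m : ℕ) : (symplJ m)ᵀ * symplJ m = 1 := by
  ext i j
  rw [Matrix.mul_apply]
  simp only [transpose_apply, Matrix.one_apply]
  have hi := i.isLt
  have hj := j.isLt
  by_cases he : i.val % 2 = 0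
  · have hlt : i.val + 1 < 2 * m := by omega
    rw [Finset.sum_eq_single (⟨i.val + 1, hlt⟩ : Fin (2 * m))]
    · have h1 : symplJ m ⟨i.val + 1, hlt⟩ i = 1 := by
        simp only [symplJ, of_apply]
        rw [if_neg (by omega), if_pos ⟨trivial, he⟩]
      rw [h1, one_mul]
      by_cases hij : i = j
      · subst hij
        rw [if_pos rfl, h1]
      · have hv : i.val ≠ j.val := fun h => hij (Fin.ext h)
        rw [if_neg hij, symplJ_apply_eq_zero (by simp; omega) (by simp; omega)]
    · intro l _ hl
      have hlv : l.val ≠ i.val + 1 := fun h => hl (Fin.ext h)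
      rw [symplJ_apply_eq_zero (by omega) (by omega), zero_mul]
    · intro h; exact absurd (Finset.mem_univ _) h
  · have hlt : i.val - 1 < 2 * m := by omega
    rw [Finset.sum_eq_single (⟨i.val - 1, hlt⟩ : Fin (2 * m))]
    · have h1 : symplJ m ⟨i.val - 1, hlt⟩ i = -1 := by
        simp only [symplJ, of_apply]
        rw [if_pos ⟨by omega, by omega⟩]
      rw [h1]
      by_cases hij : i = j
      · subst hij
        rw [if_pos rfl, h1]
        norm_num
      · have hv : i.val ≠ j.val := fun h => hij (Fin.ext h)
        rw [if_neg hij, symplJ_apply_eq_zero (by simp; omega) (by simp; omega), mul_zero]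
    · intro l _ hl
      have hlv : l.val ≠ i.val - 1 := fun h => hl (Fin.ext h)
      rw [symplJ_apply_eq_zero (by omega) (by omega), zero_mul]
    · intro h; exact absurd (Finset.mem_univ _) h

lemma symplJ_det_sq (m : ℕ) : det (symplJ m) ^ 2 = 1 := by
  have h := congrArg det (symplJ_tmul m)
  rwa [det_mul, det_transpose, ← sq, det_one] at h

lemma slice_conj {n k : ℕ} (S : Finset (Fin n)) (hS : S.card = k)
    (N : Matrix (Fin (2 * n)) (Fin (2 * n)) ℝ) :
    (symplSlice k S hS)ᵀ * N * symplSlice k S hS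
      = N.submatrix (symplRows k S hS) (symplRows k S hS) := by
  ext a b
  simp [Matrix.mul_apply, symplSlice, transpose_apply, ite_mul, mul_ite,
    Finset.sum_ite_eq, Finset.sum_ite_eq']

lemma symplJ_submatrix {n k : ℕ} (S : Finset (Fin n)) (hS : S.card = k) :
    (symplJ n).submatrix (symplRows k S hS) (symplRows k S hS) = symplJ k := by
  ext a b
  have ha2 : a.val / 2 < k := by have := a.isLt; omega
  have hb2 : b.val / 2 < k := by have := b.isLt; omega
  set u : ℕ := (S.orderEmbOfFin hS ⟨a.val / 2, ha2⟩).val with hu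
  set v : ℕ := (S.orderEmbOfFin hS ⟨b.val / 2, hb2⟩).val with hv
  have hiff : u = v ↔ a.val / 2 = b.val / 2 := by
    constructor
    · intro h
      have h2 := (S.orderEmbOfFin hS).injective (Fin.ext h)
      exact congrArg Fin.val h2
    · intro h
      have h2 : (⟨a.val / 2, ha2⟩ : Fin k) = ⟨b.val / 2, hb2⟩ := Fin.ext h
      rw [hu, hv, h2]
  have hrow : ∀ (c : Fin (2 * k)) (hc : c.val / 2 < k),
      (symplRows k S hS c).val = 2 * (S.orderEmbOfFin hS ⟨c.val / 2, hc⟩).val + c.val % 2 :=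
    fun c hc => rfl
  have hra : (symplRows k S hS a).val = 2 * u + a.val % 2 := hrow a ha2
  have hrb : (symplRows k S hS b).val = 2 * v + b.val % 2 := hrow b hb2
  simp only [submatrix_apply, symplJ, of_apply, hra, hrb]
  have hav := a.isLt
  have hbv := b.isLt
  by_cases h1 : a.val + 1 = b.val ∧ a.val % 2 = 0
  · rw [if_pos (by omega), if_pos h1]
  · rw [if_neg (by omega)]
    by_cases h2 : b.val + 1 = a.val ∧ b.val % 2 = 0
    · rw [if_pos (by omega), if_neg h1, if_pos h2]
    · rw [if_neg (by omega), if_neg h1, if_neg h2]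

/-- **Local collapse of phase space.**  Let `Φ` be a symplectic `2n × 2n`
matrix, `S ⊆ {1,…,n}` with `|S| = k`, `0 < k < n`.  With the volume expansion
factors `ν_{2k} = √det((ΦΠ_S)ᵀ(ΦΠ_S))` and
`ν_{2n−2k} = √det((ΦΠ_{Sᶜ})ᵀ(ΦΠ_{Sᶜ}))` of the complementary symplectic
slices, we have `ν_{2k} ≥ 1`, `ν_{2n−2k} ≥ 1`, `ν_{2k}·ν_{2n−2k} ≥ 1`, and
hence the angle factor `sin β = 1/(ν_{2k}·ν_{2n−2k})` from Liouville's theorem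
satisfies `sin β ≤ 1`: expansion of complementary symplectic slices forces
collapse of the angle between their images. -/
theorem local_collapse_of_phase_space (n k : ℕ) (hk : 0 < k) (hkn : k < n)
    (Φ : Matrix (Fin (2 * n)) (Fin (2 * n)) ℝ)
    (hΦ : Φᵀ * symplJ n * Φ = symplJ n)
    (S : Finset (Fin n)) (hS : S.card = k)
    (hSc : Sᶜ.card = n - k)
    (ν₁ ν₂ : ℝ)
    (hν₁ : ν₁ = Real.sqrt ((Φ * symplSlice k S hS)ᵀ * (Φ * symplSlice k S hS)).det)
    (hν₂ : ν₂ = Real.sqrt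
      ((Φ * symplSlice (n - k) Sᶜ hSc)ᵀ * (Φ * symplSlice (n - k) Sᶜ hSc)).det) :
    1 ≤ ν₁ ∧ 1 ≤ ν₂ ∧ 1 ≤ ν₁ * ν₂ ∧ 1 / (ν₁ * ν₂) ≤ 1 := by
  have key : ∀ (k' : ℕ) (S' : Finset (Fin n)) (hS' : S'.card = k'),
      1 ≤ det ((Φ * symplSlice k' S' hS')ᵀ * (Φ * symplSlice k' S' hS')) := by
    intro k' S' hS'
    set P := symplSlice k' S' hS' with hP
    have hconj : (Φ * P)ᵀ * symplJ n * (Φ * P) = symplJ k' := by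
      have h1 : (Φ * P)ᵀ * symplJ n * (Φ * P) = Pᵀ * (Φᵀ * symplJ n * Φ) * P := by
        rw [Matrix.transpose_mul]
        simp only [Matrix.mul_assoc]
      rw [h1, hΦ, hP, slice_conj, symplJ_submatrix]
    have hd : det ((Φ * P)ᵀ * symplJ n * (Φ * P)) ^ 2 = 1 := by
      rw [hconj]; exact symplJ_det_sq k'
    exact gram_det_ge (Φ * P) (symplJ n) (symplJ_tmul n) hd
  have h1 : 1 ≤ ν₁ := by
    rw [hν₁, show (1 : ℝ) = Real.sqrt 1 from Real.sqrt_one.symm]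
    exact Real.sqrt_le_sqrt (key k S hS)
  have h2 : 1 ≤ ν₂ := by
    rw [hν₂, show (1 : ℝ) = Real.sqrt 1 from Real.sqrt_one.symm]
    exact Real.sqrt_le_sqrt (key (n - k) Sᶜ hSc)
  have h3 : 1 ≤ ν₁ * ν₂ := by nlinarith
  refine ⟨h1, h2, h3, ?_⟩
  rw [div_le_one (by nlinarith)]
  exact h3
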